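/- Compatibility check 𝒟₁⁽²⁾Y = 0: let Ω ⊆ ℝ⁴ be a domain with 0 ∉ Ω and let h be a smooth complex-valued harmonic function on Ω. Define Y with components Y_{A,0′} = −(1/|q|²)∇_A^{1′}h − 2(z_A^{1′}/|q|⁴)h and Y_{A,1′} = (1/|q|²)∇_A^{0′}h + 2(z_A^{0′}/|q|⁴)h for A = 0,1. Then 𝒟₁⁽²⁾Y := ∇₀^{0′}Y_{1,0′} + ∇₀^{1′}Y_{1,1′} − ∇₁^{0′}Y_{0,0′} − ∇₁^{1′}Y_{0,1′} = 0 on Ω. -/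

import Mathlib

/-- Partial derivative in direction `μ` for complex-valued functions on `ℝ⁴`. -/
noncomputable def pdC (μ : Fin 4) (f : (Fin 4 → ℝ) → ℂ) (x : Fin 4 → ℝ) : ℂ :=
  fderiv ℝ f x (Pi.single μ 1)

/-- The raised-index operators `∇ₐ^{A′}`:
`∇₀^{0′} = −∂₂−i∂₃`, `∇₀^{1′} = −∂₀−i∂₁`, `∇₁^{0′} = ∂₀−i∂₁`, `∇₁^{1′} = −∂₂+i∂₃`. -/
noncomputable def nab (A A' : Fin 2) (f : (Fin 4 → ℝ) → ℂ) (x : Fin 4 → ℝ) : ℂ :=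
  if A = 0 then
    (if A' = 0 then -pdC 2 f x - Complex.I * pdC 3 f x
     else -pdC 0 f x - Complex.I * pdC 1 f x)
  else
    (if A' = 0 then pdC 0 f x - Complex.I * pdC 1 f x
     else -pdC 2 f x + Complex.I * pdC 3 f x)

/-- The coordinate functions `zₐ^{A′}`:
`z₀^{0′} = −x₂−ix₃`, `z₀^{1′} = −x₀−ix₁`, `z₁^{0′} = x₀−ix₁`, `z₁^{1′} = −x₂+ix₃`. -/
noncomputable def zc (A A' : Fin 2) (x : Fin 4 → ℝ) : ℂ :=
  if A = 0 then
    (if A' = 0 then -(x 2 : ℂ) - (x 3 : ℂ) * Complex.I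
     else -(x 0 : ℂ) - (x 1 : ℂ) * Complex.I)
  else
    (if A' = 0 then (x 0 : ℂ) - (x 1 : ℂ) * Complex.I
     else -(x 2 : ℂ) + (x 3 : ℂ) * Complex.I)

/-- `|q|² = x₀² + x₁² + x₂² + x₃²` (as a complex-valued function). -/
noncomputable def nqC (x : Fin 4 → ℝ) : ℂ :=
  (((x 0) ^ 2 + (x 1) ^ 2 + (x 2) ^ 2 + (x 3) ^ 2 : ℝ) : ℂ)

/-- The components of `Y`:
`Y_{A,0′} = −(1/|q|²)∇_A^{1′}h − 2(z_A^{1′}/|q|⁴)h`,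
`Y_{A,1′} = (1/|q|²)∇_A^{0′}h + 2(z_A^{0′}/|q|⁴)h`. -/
noncomputable def Ycomp (h : (Fin 4 → ℝ) → ℂ) (A A' : Fin 2) (x : Fin 4 → ℝ) : ℂ :=
  if A' = 0 then -(1 / nqC x) * nab A 1 h x - 2 * (zc A 1 x / (nqC x) ^ 2) * h x
  else (1 / nqC x) * nab A 0 h x + 2 * (zc A 0 x / (nqC x) ^ 2) * h x

section Helpers

private lemma pdC_add (μ : Fin 4) {f g : (Fin 4 → ℝ) → ℂ} {x : Fin 4 → ℝ}
    (hf : DifferentiableAt ℝ f x) (hg : DifferentiableAt ℝ g x) :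
    pdC μ (fun y => f y + g y) x = pdC μ f x + pdC μ g x := by
  simp only [pdC]
  rw [fderiv_fun_add hf hg]
  simp

private lemma pdC_mul (μ : Fin 4) {f g : (Fin 4 → ℝ) → ℂ} {x : Fin 4 → ℝ}
    (hf : DifferentiableAt ℝ f x) (hg : DifferentiableAt ℝ g x) :
    pdC μ (fun y => f y * g y) x = pdC μ f x * g x + f x * pdC μ g x := by
  simp only [pdC]
  rw [fderiv_fun_mul hf hg]
  simp [smul_eq_mul]
  ring

private lemma pdC_const_mul (μ : Fin 4) (c : ℂ) {f : (Fin 4 → ℝ) → ℂ} {x : Fin 4 → ℝ}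
    (hf : DifferentiableAt ℝ f x) :
    pdC μ (fun y => c * f y) x = c * pdC μ f x := by
  simp only [pdC]
  rw [fderiv_const_mul hf c]
  simp

private lemma pdC_inv (μ : Fin 4) {f : (Fin 4 → ℝ) → ℂ} {x : Fin 4 → ℝ}
    (hf : DifferentiableAt ℝ f x) (h0 : f x ≠ 0) :
    pdC μ (fun y => (f y)⁻¹) x = -((f x)⁻¹ * (f x)⁻¹) * pdC μ f x := by
  have he : (fun y => (f y)⁻¹) = Inv.inv ∘ f := rfl
  simp only [pdC]
  rw [he, fderiv_comp x (differentiableAt_inv h0) hf, fderiv_inv' h0]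
  simp
  ring

private lemma diff_coord (ν : Fin 4) (x : Fin 4 → ℝ) :
    DifferentiableAt ℝ (fun y : Fin 4 → ℝ => ((y ν : ℝ) : ℂ)) x :=
  (Complex.ofRealCLM.comp
    (ContinuousLinearMap.proj (R := ℝ) (φ := fun _ : Fin 4 => ℝ) ν)).differentiableAt

private lemma pdC_coord (μ ν : Fin 4) (x : Fin 4 → ℝ) :
    pdC μ (fun y : Fin 4 → ℝ => ((y ν : ℝ) : ℂ)) x = if ν = μ then 1 else 0 := by
  have h1 : (fun y : Fin 4 → ℝ => ((y ν : ℝ) : ℂ))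
      = ⇑(Complex.ofRealCLM.comp
          (ContinuousLinearMap.proj (R := ℝ) (φ := fun _ : Fin 4 => ℝ) ν)) := rfl
  rw [pdC, h1, ContinuousLinearMap.fderiv]
  simp [Pi.single_apply]
  split_ifs <;> simp

private lemma nqC_eq : nqC = fun y : Fin 4 → ℝ =>
    ((y 0 : ℝ) : ℂ) * ((y 0 : ℝ) : ℂ) + ((y 1 : ℝ) : ℂ) * ((y 1 : ℝ) : ℂ)
      + ((y 2 : ℝ) : ℂ) * ((y 2 : ℝ) : ℂ) + ((y 3 : ℝ) : ℂ) * ((y 3 : ℝ) : ℂ) := by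
  funext y
  simp only [nqC]
  push_cast
  ring

private lemma diff_nqC (x : Fin 4 → ℝ) : DifferentiableAt ℝ nqC x := by
  rw [nqC_eq]
  exact ((((diff_coord 0 x).mul (diff_coord 0 x)).add
    ((diff_coord 1 x).mul (diff_coord 1 x))).add
    ((diff_coord 2 x).mul (diff_coord 2 x))).add ((diff_coord 3 x).mul (diff_coord 3 x))

private lemma pdC_nqC (μ : Fin 4) (x : Fin 4 → ℝ) :
    pdC μ nqC x = 2 * ((x μ : ℝ) : ℂ) := by
  rw [nqC_eq]
  rw [pdC_add μ (((((diff_coord 0 x).fun_mul (diff_coord 0 x)).fun_add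
        ((diff_coord 1 x).fun_mul (diff_coord 1 x))).fun_add
        ((diff_coord 2 x).fun_mul (diff_coord 2 x)))) ((diff_coord 3 x).fun_mul (diff_coord 3 x)),
      pdC_add μ ((((diff_coord 0 x).fun_mul (diff_coord 0 x)).fun_add
        ((diff_coord 1 x).fun_mul (diff_coord 1 x)))) ((diff_coord 2 x).fun_mul (diff_coord 2 x)),
      pdC_add μ ((diff_coord 0 x).fun_mul (diff_coord 0 x)) ((diff_coord 1 x).fun_mul (diff_coord 1 x)),
      pdC_mul μ (diff_coord 0 x) (diff_coord 0 x), pdC_mul μ (diff_coord 1 x) (diff_coord 1 x),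
      pdC_mul μ (diff_coord 2 x) (diff_coord 2 x), pdC_mul μ (diff_coord 3 x) (diff_coord 3 x),
      pdC_coord μ 0, pdC_coord μ 1, pdC_coord μ 2, pdC_coord μ 3]
  fin_cases μ <;> simp <;> ring

private lemma diff_affine (k0 k1 k2 k3 : ℂ) (x : Fin 4 → ℝ) :
    DifferentiableAt ℝ (fun y : Fin 4 → ℝ =>
      k0 * ((y 0 : ℝ) : ℂ) + k1 * ((y 1 : ℝ) : ℂ) + k2 * ((y 2 : ℝ) : ℂ)
        + k3 * ((y 3 : ℝ) : ℂ)) x :=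
  ((((diff_coord 0 x).const_mul k0).add ((diff_coord 1 x).const_mul k1)).add
    ((diff_coord 2 x).const_mul k2)).add ((diff_coord 3 x).const_mul k3)

private lemma pdC_affine (μ : Fin 4) (k0 k1 k2 k3 : ℂ) (x : Fin 4 → ℝ) :
    pdC μ (fun y : Fin 4 → ℝ =>
      k0 * ((y 0 : ℝ) : ℂ) + k1 * ((y 1 : ℝ) : ℂ) + k2 * ((y 2 : ℝ) : ℂ)
        + k3 * ((y 3 : ℝ) : ℂ)) x
      = if μ = 0 then k0 else if μ = 1 then k1 else if μ = 2 then k2 else k3 := by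
  rw [pdC_add μ ((((diff_coord 0 x).const_mul k0).fun_add ((diff_coord 1 x).const_mul k1)).fun_add
        ((diff_coord 2 x).const_mul k2)) ((diff_coord 3 x).const_mul k3),
      pdC_add μ (((diff_coord 0 x).const_mul k0).fun_add ((diff_coord 1 x).const_mul k1))
        ((diff_coord 2 x).const_mul k2),
      pdC_add μ ((diff_coord 0 x).const_mul k0) ((diff_coord 1 x).const_mul k1),
      pdC_const_mul μ k0 (diff_coord 0 x), pdC_const_mul μ k1 (diff_coord 1 x),
      pdC_const_mul μ k2 (diff_coord 2 x), pdC_const_mul μ k3 (diff_coord 3 x),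
      pdC_coord μ 0, pdC_coord μ 1, pdC_coord μ 2, pdC_coord μ 3]
  fin_cases μ <;> simp

private lemma pd_master (μ i j : Fin 4) (a b k0 k1 k2 k3 : ℂ)
    {h : (Fin 4 → ℝ) → ℂ} {x : Fin 4 → ℝ} (hq : nqC x ≠ 0)
    (hhd : DifferentiableAt ℝ h x)
    (hid : DifferentiableAt ℝ (pdC i h) x) (hjd : DifferentiableAt ℝ (pdC j h) x) :
    pdC μ (fun y => (nqC y)⁻¹ * (a * pdC i h y + b * pdC j h y)
        + (k0 * ((y 0 : ℝ) : ℂ) + k1 * ((y 1 : ℝ) : ℂ) + k2 * ((y 2 : ℝ) : ℂ)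
            + k3 * ((y 3 : ℝ) : ℂ)) * ((nqC y)⁻¹ * (nqC y)⁻¹) * h y) x
      = (-((nqC x)⁻¹ * (nqC x)⁻¹) * (2 * ((x μ : ℝ) : ℂ)))
            * (a * pdC i h x + b * pdC j h x)
        + (nqC x)⁻¹ * (a * pdC μ (pdC i h) x + b * pdC μ (pdC j h) x)
        + (if μ = 0 then k0 else if μ = 1 then k1 else if μ = 2 then k2 else k3)
            * ((nqC x)⁻¹ * (nqC x)⁻¹) * h x
        + (k0 * ((x 0 : ℝ) : ℂ) + k1 * ((x 1 : ℝ) : ℂ) + k2 * ((x 2 : ℝ) : ℂ)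
            + k3 * ((x 3 : ℝ) : ℂ))
            * (2 * (-((nqC x)⁻¹ * (nqC x)⁻¹) * (2 * ((x μ : ℝ) : ℂ))) * (nqC x)⁻¹) * h x
        + (k0 * ((x 0 : ℝ) : ℂ) + k1 * ((x 1 : ℝ) : ℂ) + k2 * ((x 2 : ℝ) : ℂ)
            + k3 * ((x 3 : ℝ) : ℂ)) * ((nqC x)⁻¹ * (nqC x)⁻¹) * pdC μ h x := by
  have dQ : DifferentiableAt ℝ nqC x := diff_nqC x
  have dInv : DifferentiableAt ℝ (fun y => (nqC y)⁻¹) x := dQ.inv hq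
  have dS : DifferentiableAt ℝ (fun y => a * pdC i h y + b * pdC j h y) x :=
    (hid.const_mul a).add (hjd.const_mul b)
  have dZ : DifferentiableAt ℝ (fun y : Fin 4 → ℝ =>
      k0 * ((y 0 : ℝ) : ℂ) + k1 * ((y 1 : ℝ) : ℂ) + k2 * ((y 2 : ℝ) : ℂ)
        + k3 * ((y 3 : ℝ) : ℂ)) x := diff_affine k0 k1 k2 k3 x
  have dInv2 : DifferentiableAt ℝ (fun y => (nqC y)⁻¹ * (nqC y)⁻¹) x := dInv.mul dInv
  have dZI : DifferentiableAt ℝ (fun y : Fin 4 → ℝ =>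
      (k0 * ((y 0 : ℝ) : ℂ) + k1 * ((y 1 : ℝ) : ℂ) + k2 * ((y 2 : ℝ) : ℂ)
        + k3 * ((y 3 : ℝ) : ℂ)) * ((nqC y)⁻¹ * (nqC y)⁻¹)) x := dZ.mul dInv2
  rw [pdC_add μ (dInv.fun_mul dS) (dZI.fun_mul hhd), pdC_mul μ dInv dS, pdC_mul μ dZI hhd,
      pdC_mul μ dZ dInv2, pdC_mul μ dInv dInv, pdC_inv μ dQ hq, pdC_nqC μ x,
      pdC_add μ (hid.const_mul a) (hjd.const_mul b), pdC_const_mul μ a hid,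
      pdC_const_mul μ b hjd, pdC_affine μ k0 k1 k2 k3 x]
  ring

end Helpers

set_option maxHeartbeats 4000000 in
/-- Compatibility check `𝒟₁⁽²⁾Y = 0` for harmonic `h` on a domain not containing the
origin. -/
theorem D1_of_Y_eq_zero (Ω : Set (Fin 4 → ℝ)) (hΩ : IsOpen Ω)
    (h0 : (0 : Fin 4 → ℝ) ∉ Ω) (h : (Fin 4 → ℝ) → ℂ) (hh : ContDiffOn ℝ (⊤ : ℕ∞) h Ω)
    (hharm : ∀ x ∈ Ω,
      pdC 0 (pdC 0 h) x + pdC 1 (pdC 1 h) x + pdC 2 (pdC 2 h) x + pdC 3 (pdC 3 h) x = 0) :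
    ∀ x ∈ Ω,
      nab 0 0 (fun y => Ycomp h 1 0 y) x + nab 0 1 (fun y => Ycomp h 1 1 y) x -
        nab 1 0 (fun y => Ycomp h 0 0 y) x - nab 1 1 (fun y => Ycomp h 0 1 y) x = 0 := by
  intro x hx
  have hmem : Ω ∈ nhds x := hΩ.mem_nhds hx
  have hc : ContDiffAt ℝ (⊤ : ℕ∞) h x := hh.contDiffAt hmem
  have hhd : DifferentiableAt ℝ h x := hc.differentiableAt (by simp)
  have hcf : ContDiffAt ℝ (⊤ : ℕ∞) (fderiv ℝ h) x := hc.fderiv_right (le_of_eq (by simp))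
  have hpdeq : ∀ i : Fin 4, pdC i h = fun y => fderiv ℝ h y (Pi.single i 1) := fun i => rfl
  have hpd : ∀ i : Fin 4, DifferentiableAt ℝ (pdC i h) x := by
    intro i
    rw [hpdeq i]
    exact (hcf.differentiableAt (by simp)).clm_apply (differentiableAt_const _)
  -- nonvanishing of |q|²
  have hx0 : x ≠ 0 := fun hxe => h0 (hxe ▸ hx)
  have hq0 : nqC x ≠ 0 := by
    simp only [nqC, ne_eq, Complex.ofReal_eq_zero]
    intro hs
    apply hx0
    funext i
    have h0' : x 0 = 0 := by nlinarith [sq_nonneg (x 0), sq_nonneg (x 1), sq_nonneg (x 2), sq_nonneg (x 3)]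
    have h1' : x 1 = 0 := by nlinarith [sq_nonneg (x 0), sq_nonneg (x 1), sq_nonneg (x 2), sq_nonneg (x 3)]
    have h2' : x 2 = 0 := by nlinarith [sq_nonneg (x 0), sq_nonneg (x 1), sq_nonneg (x 2), sq_nonneg (x 3)]
    have h3' : x 3 = 0 := by nlinarith [sq_nonneg (x 0), sq_nonneg (x 1), sq_nonneg (x 2), sq_nonneg (x 3)]
    fin_cases i <;> simp [h0', h1', h2', h3']
  -- symmetry of second derivatives
  have hsymm : IsSymmSndFDerivAt ℝ h x := hc.isSymmSndFDerivAt (by rw [minSmoothness_of_isRCLikeNormedField]; exact WithTop.coe_le_coe.2 (le_top : (2 : ℕ∞) ≤ ⊤))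
  have hswap : ∀ i j : Fin 4, pdC i (pdC j h) x = pdC j (pdC i h) x := by
    intro i j
    have hd : DifferentiableAt ℝ (fderiv ℝ h) x := hcf.differentiableAt (by simp)
    have e : ∀ k l : Fin 4, pdC k (pdC l h) x
        = fderiv ℝ (fderiv ℝ h) x (Pi.single k 1) (Pi.single l 1) := by
      intro k l
      rw [show pdC l h = fun y => fderiv ℝ h y (Pi.single l 1) from rfl]
      rw [pdC, fderiv_clm_apply hd (differentiableAt_const _)]
      simp
    rw [e i j, e j i, hsymm (Pi.single i 1) (Pi.single j 1)]
  -- normal forms of the four components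
  have e10 : (fun y => Ycomp h 1 0 y) = (fun y =>
      (nqC y)⁻¹ * ((1:ℂ) * pdC 2 h y + (-Complex.I) * pdC 3 h y)
        + ((0:ℂ) * ((y 0 : ℝ) : ℂ) + (0:ℂ) * ((y 1 : ℝ) : ℂ) + (2:ℂ) * ((y 2 : ℝ) : ℂ)
            + (-2*Complex.I) * ((y 3 : ℝ) : ℂ)) * ((nqC y)⁻¹ * (nqC y)⁻¹) * h y) := by
    funext y
    simp only [Ycomp, nab, zc, if_true, if_false]
    norm_num
    ring
  have e11 : (fun y => Ycomp h 1 1 y) = (fun y =>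
      (nqC y)⁻¹ * ((1:ℂ) * pdC 0 h y + (-Complex.I) * pdC 1 h y)
        + ((2:ℂ) * ((y 0 : ℝ) : ℂ) + (-2*Complex.I) * ((y 1 : ℝ) : ℂ) + (0:ℂ) * ((y 2 : ℝ) : ℂ)
            + (0:ℂ) * ((y 3 : ℝ) : ℂ)) * ((nqC y)⁻¹ * (nqC y)⁻¹) * h y) := by
    funext y
    simp only [Ycomp, nab, zc, if_true, if_false]
    norm_num
    ring
  have e00 : (fun y => Ycomp h 0 0 y) = (fun y =>
      (nqC y)⁻¹ * ((1:ℂ) * pdC 0 h y + (Complex.I) * pdC 1 h y)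
        + ((2:ℂ) * ((y 0 : ℝ) : ℂ) + (2*Complex.I) * ((y 1 : ℝ) : ℂ) + (0:ℂ) * ((y 2 : ℝ) : ℂ)
            + (0:ℂ) * ((y 3 : ℝ) : ℂ)) * ((nqC y)⁻¹ * (nqC y)⁻¹) * h y) := by
    funext y
    simp only [Ycomp, nab, zc, if_true, if_false]
    norm_num
    ring
  have e01 : (fun y => Ycomp h 0 1 y) = (fun y =>
      (nqC y)⁻¹ * ((-1:ℂ) * pdC 2 h y + (-Complex.I) * pdC 3 h y)
        + ((0:ℂ) * ((y 0 : ℝ) : ℂ) + (0:ℂ) * ((y 1 : ℝ) : ℂ) + (-2:ℂ) * ((y 2 : ℝ) : ℂ)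
            + (-2*Complex.I) * ((y 3 : ℝ) : ℂ)) * ((nqC y)⁻¹ * (nqC y)⁻¹) * h y) := by
    funext y
    simp only [Ycomp, nab, zc, if_true, if_false]
    norm_num
    ring
  simp only [nab, if_true, if_false]
  norm_num
  rw [e10, e11, e00, e01]
  rw [pd_master 2 2 3 1 (-Complex.I) 0 0 2 (-2*Complex.I) hq0 hhd (hpd 2) (hpd 3),
      pd_master 3 2 3 1 (-Complex.I) 0 0 2 (-2*Complex.I) hq0 hhd (hpd 2) (hpd 3),
      pd_master 0 0 1 1 (-Complex.I) 2 (-2*Complex.I) 0 0 hq0 hhd (hpd 0) (hpd 1),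
      pd_master 1 0 1 1 (-Complex.I) 2 (-2*Complex.I) 0 0 hq0 hhd (hpd 0) (hpd 1),
      pd_master 0 0 1 1 Complex.I 2 (2*Complex.I) 0 0 hq0 hhd (hpd 0) (hpd 1),
      pd_master 1 0 1 1 Complex.I 2 (2*Complex.I) 0 0 hq0 hhd (hpd 0) (hpd 1),
      pd_master 2 2 3 (-1) (-Complex.I) 0 0 (-2) (-2*Complex.I) hq0 hhd (hpd 2) (hpd 3),
      pd_master 3 2 3 (-1) (-Complex.I) 0 0 (-2) (-2*Complex.I) hq0 hhd (hpd 2) (hpd 3)]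
  have h32 : pdC 3 (pdC 2 h) x = pdC 2 (pdC 3 h) x := hswap 3 2
  have h10 : pdC 1 (pdC 0 h) x = pdC 0 (pdC 1 h) x := hswap 1 0
  have h33 : pdC 3 (pdC 3 h) x
      = -pdC 0 (pdC 0 h) x - pdC 1 (pdC 1 h) x - pdC 2 (pdC 2 h) x := by
    linear_combination hharm x hx
  simp only [Fin.reduceEq, reduceIte]
  rw [h32, h10, h33]
  have hQval : nqC x = ((x 0 : ℝ) : ℂ) ^ 2 + ((x 1 : ℝ) : ℂ) ^ 2 + ((x 2 : ℝ) : ℂ) ^ 2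
      + ((x 3 : ℝ) : ℂ) ^ 2 := by
    simp only [nqC]
    push_cast
    ring
  have ht : (nqC x)⁻¹ * (((x 0 : ℝ) : ℂ) ^ 2 + ((x 1 : ℝ) : ℂ) ^ 2 + ((x 2 : ℝ) : ℂ) ^ 2
      + ((x 3 : ℝ) : ℂ) ^ 2) = 1 := by
    rw [← hQval]
    exact inv_mul_cancel₀ hq0
  linear_combination (16 * (nqC x)⁻¹ * (nqC x)⁻¹ * h x) * ht + ((-2) * (nqC x)⁻¹ * (pdC 2 (pdC 2 h) x) + (-2) * (nqC x)⁻¹ * (pdC 0 (pdC 0 h) x) + (8) * (nqC x)⁻¹ * (nqC x)⁻¹ * (h x) + (-16) * (nqC x)⁻¹ * (nqC x)⁻¹ * (nqC x)⁻¹ * ((x 3 : ℝ) : ℂ) * ((x 3 : ℝ) : ℂ) * (h x) + (-16) * (nqC x)⁻¹ * (nqC x)⁻¹ * (nqC x)⁻¹ * ((x 1 : ℝ) : ℂ) * ((x 1 : ℝ) : ℂ) * (h x)) * Complex.I_sq
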